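/- arXiv:2506.19422 — 4 statements merged into one kernel-verified Lean document; each statement's English description precedes it below -/
import Mathlib

section
/- In the setting of the Hardy-type test family u_ε, there exist constants c₂ ≥ c₁ > 0 and ε₀ ∈ (0,1) such that for all ε ∈ (0, ε₀): c₁ |log ε|^{2α+1} ≤ B_ε := ∫_{B_1} u_ε(x)²/|x|² dx ≤ c₂ |log ε|^{2α+1}. -/
/-!
In polar coordinates `B_ε = N |B_1| ∫_0^∞ log(1/r)^{2α} (η_ε(r) ψ(r))² dr / r`. As `0 ≤ η_ε ψ ≤ 1`,
the integrand vanishes off `[ε², 1/2]` and equals `log(1/r)^{2α} / r` on `(ε, 1/4]`, so `B_ε` is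
squeezed between the integrals of `log(1/r)^{2α} / r` over these two intervals. An antiderivative
is `-log(1/r)^{2α+1} / (2α+1)`, and both integrals are of exact order `|log ε|^{2α+1}`.
-/

open MeasureTheory Metric Set

/-- The logarithmic cut-off `η_ε`. -/
noncomputable def eta (ξ : ℝ → ℝ) (ε r : ℝ) : ℝ :=
  if r < ε ^ 2 then 0
  else if r ≤ ε then ξ (Real.log (r / ε ^ 2) / Real.log (1 / ε))
  else 1

/-- The Hardy-type test family
`u_ε(x) = |x|^{-(N-2)/2} (log(1/|x|))^α η_ε(|x|) ψ(|x|)`. -/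
noncomputable def uTest (N : ℕ) (ξ ψ : ℝ → ℝ) (α ε : ℝ)
    (x : EuclideanSpace ℝ (Fin N)) : ℝ :=
  ‖x‖ ^ (-(((N : ℝ) - 2) / 2)) * Real.log (1 / ‖x‖) ^ α * eta ξ ε ‖x‖ * ψ ‖x‖

section Eta

variable {ξ : ℝ → ℝ} {ε r : ℝ}

lemma eta_of_lt_sq (hr : r < ε ^ 2) : eta ξ ε r = 0 := if_pos hr

lemma eta_of_gt (hε0 : 0 ≤ ε) (hε1 : ε ≤ 1) (hr : ε < r) : eta ξ ε r = 1 := by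
  have : ε ^ 2 ≤ ε := by nlinarith
  rw [eta, if_neg (by linarith), if_neg hr.not_ge]

lemma eta_mem_Icc (hξ : ∀ t ∈ Icc (0 : ℝ) 1, ξ t ∈ Icc (0 : ℝ) 1) (hε0 : 0 < ε) (hε1 : ε < 1)
    (r : ℝ) : eta ξ ε r ∈ Icc (0 : ℝ) 1 := by
  unfold eta
  split_ifs with hlow hup
  · exact ⟨le_rfl, zero_le_one⟩
  · have hε2 : 0 < ε ^ 2 := by positivity
    have hlog : 0 < Real.log (1 / ε) := Real.log_pos (by rw [lt_div_iff₀ hε0]; linarith)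
    have hr : ε ^ 2 ≤ r := not_lt.mp hlow
    refine hξ _ ⟨div_nonneg (Real.log_nonneg ?_) hlog.le, (div_le_one hlog).mpr ?_⟩
    · rwa [le_div_iff₀ hε2, one_mul]
    · refine Real.log_le_log (div_pos (hε2.trans_le hr) hε2) ?_
      rw [div_le_div_iff₀ hε2 hε0]
      nlinarith
  · exact ⟨zero_le_one, le_rfl⟩

lemma measurable_eta (hξ : Measurable ξ) (ε : ℝ) : Measurable (eta ξ ε) := by
  unfold eta
  refine Measurable.ite (measurableSet_lt measurable_id measurable_const) measurable_const
    (Measurable.ite (measurableSet_le measurable_id measurable_const) ?_ measurable_const)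
  fun_prop

end Eta

section LogIntegral

variable {q ε : ℝ}

lemma continuousOn_log_inv_rpow_div (hq : 0 ≤ q) :
    ContinuousOn (fun y => Real.log (1 / y) ^ q / y) (Ioi 0) := by
  have hne : ∀ y ∈ Ioi (0 : ℝ), y ≠ 0 := fun y hy => (mem_Ioi.mp hy).ne'
  refine ContinuousOn.div ?_ continuousOn_id hne
  refine ContinuousOn.rpow_const ?_ fun _ _ => Or.inr hq
  exact (continuousOn_const.div continuousOn_id hne).log fun y hy => one_div_ne_zero (hne y hy)

lemma integral_log_inv_rpow_div {a b : ℝ} (hq : 0 ≤ q) (ha : 0 < a) (hb : 0 < b) :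
    ∫ y in a..b, Real.log (1 / y) ^ q / y
      = (Real.log (1 / a) ^ (q + 1) - Real.log (1 / b) ^ (q + 1)) / (q + 1) := by
  have hpos : ∀ y ∈ uIcc a b, 0 < y := fun y hy => (lt_min ha hb).trans_le hy.1
  have hderiv : ∀ y ∈ uIcc a b, HasDerivAt (fun y => -(Real.log (1 / y) ^ (q + 1)) / (q + 1))
      (Real.log (1 / y) ^ q / y) y := by
    intro y hy
    have hlog : HasDerivAt (fun y : ℝ => Real.log (1 / y)) (-y⁻¹) y := by
      refine (Real.hasDerivAt_log (hpos y hy).ne').neg.congr_of_eventuallyEq ?_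
      exact Filter.Eventually.of_forall fun z => by simp [Real.log_inv]
    refine ((hlog.rpow_const (Or.inr (by linarith))).neg.div_const (q + 1)).congr_deriv ?_
    have : q + 1 ≠ 0 := by linarith
    rw [add_sub_cancel_right]
    field_simp
  have hcont := (continuousOn_log_inv_rpow_div hq).mono hpos
  rw [intervalIntegral.integral_eq_sub_of_hasDerivAt hderiv hcont.intervalIntegrable]
  ring

lemma integral_log_inv_rpow_div_le (hq : 0 ≤ q) (hε0 : 0 < ε) (hε1 : ε ≤ 1) :
    ∫ y in ε ^ 2..1 / 2, Real.log (1 / y) ^ q / y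
      ≤ 2 ^ (q + 1) / (q + 1) * Real.log (1 / ε) ^ (q + 1) := by
  have hL : 0 ≤ Real.log (1 / ε) := Real.log_nonneg (by rwa [le_div_iff₀ hε0, one_mul])
  have hlog_sq : Real.log (1 / ε ^ 2) = 2 * Real.log (1 / ε) := by
    rw [← one_div_pow, Real.log_pow, Nat.cast_two]
  have hlog2 : 0 ≤ Real.log (1 / (1 / 2)) ^ (q + 1) :=
    Real.rpow_nonneg (Real.log_nonneg (by norm_num)) _
  rw [integral_log_inv_rpow_div hq (by positivity) (by norm_num), hlog_sq,
    Real.mul_rpow zero_le_two hL]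
  have hq1 : 0 < q + 1 := by linarith
  rw [div_mul_eq_mul_div]
  gcongr
  linarith

lemma le_integral_log_inv_rpow_div (hq : 0 ≤ q) (hε0 : 0 < ε) (hε : ε ≤ 1 / 16) :
    Real.log (1 / ε) ^ (q + 1) / (2 * (q + 1))
      ≤ ∫ y in ε..1 / 4, Real.log (1 / y) ^ q / y := by
  set L := Real.log (1 / ε)
  have hq1 : 1 ≤ q + 1 := by linarith
  have hlog4 : Real.log 4 ≤ L / 2 := by
    have h16 : Real.log 16 ≤ L := Real.log_le_log (by norm_num) (by rw [le_div_iff₀ hε0]; linarith)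
    have : Real.log 16 = 2 * Real.log 4 := by
      rw [show (16 : ℝ) = 4 ^ 2 by norm_num, Real.log_pow, Nat.cast_two]
    linarith
  have hL : 0 ≤ L := by linarith [Real.log_nonneg (by norm_num : (1 : ℝ) ≤ 4)]
  have hsmall : Real.log (1 / (1 / 4)) ^ (q + 1) ≤ L ^ (q + 1) / 2 := calc
    Real.log (1 / (1 / 4)) ^ (q + 1) ≤ (L / 2) ^ (q + 1) := by
      rw [one_div_one_div]
      exact Real.rpow_le_rpow (Real.log_nonneg (by norm_num)) hlog4 (by linarith)
    _ = L ^ (q + 1) / 2 ^ (q + 1) := Real.div_rpow hL zero_le_two _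
    _ ≤ L ^ (q + 1) / 2 := by
      gcongr
      simpa using Real.rpow_le_rpow_of_exponent_le one_le_two hq1
  rw [integral_log_inv_rpow_div hq hε0 (by norm_num), div_le_div_iff₀ (by positivity) (by linarith)]
  nlinarith

/-- The radial integrand of `u_ε² / |x|²` in polar coordinates. -/
noncomputable def hardyDensity (N : ℕ) (ξ ψ : ℝ → ℝ) (α ε y : ℝ) : ℝ :=
  y ^ (N - 1) * ((y ^ (-(((N : ℝ) - 2) / 2)) * Real.log (1 / y) ^ α * eta ξ ε y * ψ y) ^ 2 / y ^ 2)

section HardyDensity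

variable {N : ℕ} {ξ ψ : ℝ → ℝ} {α ε y : ℝ}

lemma setIntegral_ball_uTest_sq_div_eq (hN : 1 ≤ N) (hψ0 : ∀ t : ℝ, 1 / 2 ≤ |t| → ψ t = 0) :
    ∫ x in ball (0 : EuclideanSpace ℝ (Fin N)) 1, uTest N ξ ψ α ε x ^ 2 / ‖x‖ ^ 2
      = N * volume.real (ball (0 : EuclideanSpace ℝ (Fin N)) 1)
          * ∫ y in Ioi 0, hardyDensity N ξ ψ α ε y := by
  have : Nonempty (Fin N) := ⟨⟨0, hN⟩⟩
  rw [setIntegral_eq_integral_of_forall_compl_eq_zero fun x hx => ?_]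
  · have := integral_fun_norm_addHaar (volume : Measure (EuclideanSpace ℝ (Fin N)))
      fun r => (r ^ (-(((N : ℝ) - 2) / 2)) * Real.log (1 / r) ^ α * eta ξ ε r * ψ r) ^ 2 / r ^ 2
    rw [finrank_euclideanSpace_fin, nsmul_eq_mul, smul_eq_mul, ← mul_assoc] at this
    exact this
  · have hx1 : 1 ≤ ‖x‖ := by simpa using hx
    simp [uTest, hψ0 ‖x‖ (by rw [abs_norm]; linarith)]

lemma hardyDensity_eq (hN : 1 ≤ N) (hy0 : 0 < y) (hy1 : y ≤ 1) :
    hardyDensity N ξ ψ α ε y = Real.log (1 / y) ^ (2 * α) / y * (eta ξ ε y * ψ y) ^ 2 := by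
  have hL : 0 ≤ Real.log (1 / y) := Real.log_nonneg (by rwa [le_div_iff₀ hy0, one_mul])
  have hpow : y ^ (N - 1) * (y ^ (-(((N : ℝ) - 2) / 2))) ^ 2 = y := by
    rw [← Real.rpow_mul_natCast hy0.le, ← Real.rpow_natCast, ← Real.rpow_add hy0,
      Nat.cast_sub hN]
    norm_num
  calc hardyDensity N ξ ψ α ε y
      = y ^ (N - 1) * (y ^ (-(((N : ℝ) - 2) / 2))) ^ 2 * (Real.log (1 / y) ^ α) ^ 2
          * (eta ξ ε y * ψ y) ^ 2 / y ^ 2 := by unfold hardyDensity; ring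
    _ = Real.log (1 / y) ^ (2 * α) / y * (eta ξ ε y * ψ y) ^ 2 := by
      rw [hpow, ← Real.rpow_mul_natCast hL]
      field_simp
      ring_nf

lemma hardyDensity_nonneg (hy : 0 ≤ y) : 0 ≤ hardyDensity N ξ ψ α ε y := by
  unfold hardyDensity
  positivity

lemma hardyDensity_eq_zero_of_notMem (hψ0 : ∀ t : ℝ, 1 / 2 ≤ |t| → ψ t = 0)
    (hy : y ∉ Icc (ε ^ 2) (1 / 2)) : hardyDensity N ξ ψ α ε y = 0 := by
  rcases not_and_or.mp hy with hlow | hhigh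
  · simp [hardyDensity, eta_of_lt_sq (not_le.mp hlow)]
  · have hψy : ψ y = 0 := hψ0 y ((not_le.mp hhigh).le.trans (le_abs_self y))
    simp [hardyDensity, hψy]

lemma hardyDensity_le (hN : 1 ≤ N) (hξmem : ∀ t ∈ Icc (0 : ℝ) 1, ξ t ∈ Icc (0 : ℝ) 1)
    (hψmem : ∀ t : ℝ, ψ t ∈ Icc (0 : ℝ) 1) (hε0 : 0 < ε) (hε1 : ε < 1) (hy0 : 0 < y)
    (hy1 : y ≤ 1) : hardyDensity N ξ ψ α ε y ≤ Real.log (1 / y) ^ (2 * α) / y := by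
  have hL : 0 ≤ Real.log (1 / y) := Real.log_nonneg (by rwa [le_div_iff₀ hy0, one_mul])
  obtain ⟨hη0, hη1⟩ := eta_mem_Icc hξmem hε0 hε1 y
  obtain ⟨hψ0, hψ1⟩ := hψmem y
  rw [hardyDensity_eq hN hy0 hy1]
  refine mul_le_of_le_one_right (by positivity) (pow_le_one₀ (by positivity) ?_)
  exact mul_le_one₀ hη1 hψ0 hψ1

lemma hardyDensity_eq_of_mem (hN : 1 ≤ N) (hψ1 : ∀ t : ℝ, |t| ≤ 1 / 4 → ψ t = 1)
    (hε0 : 0 < ε) (hε1 : ε ≤ 1) (hy : y ∈ Ioc ε (1 / 4)) :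
    hardyDensity N ξ ψ α ε y = Real.log (1 / y) ^ (2 * α) / y := by
  have hy0 : 0 < y := hε0.trans hy.1
  rw [hardyDensity_eq hN hy0 (by linarith [hy.2]), eta_of_gt hε0.le hε1 hy.1,
    hψ1 y (by rw [abs_of_pos hy0]; exact hy.2)]
  ring

lemma measurable_hardyDensity (hξ : Measurable ξ) (hψ : Measurable ψ) :
    Measurable (hardyDensity N ξ ψ α ε) := by
  have := measurable_eta hξ ε
  unfold hardyDensity
  fun_prop

lemma integrableOn_hardyDensity (hN : 1 ≤ N) (hα : 0 ≤ α) (hξ : Measurable ξ)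
    (hξmem : ∀ t ∈ Icc (0 : ℝ) 1, ξ t ∈ Icc (0 : ℝ) 1) (hψ : Measurable ψ)
    (hψmem : ∀ t : ℝ, ψ t ∈ Icc (0 : ℝ) 1) (hψ0 : ∀ t : ℝ, 1 / 2 ≤ |t| → ψ t = 0)
    (hε0 : 0 < ε) (hε1 : ε < 1) : IntegrableOn (hardyDensity N ξ ψ α ε) (Ioi 0) := by
  have hsub : Icc (ε ^ 2) (1 / 2) ⊆ Ioi 0 := fun y hy => (by positivity : 0 < ε ^ 2).trans_le hy.1
  refine IntegrableOn.of_forall_sdiff_eq_zero ?_ measurableSet_Ioi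
    fun y hy => hardyDensity_eq_zero_of_notMem hψ0 hy.2
  refine Integrable.mono'
    (((continuousOn_log_inv_rpow_div (q := 2 * α) (by positivity)).mono hsub).integrableOn_Icc)
    (measurable_hardyDensity hξ hψ).aestronglyMeasurable ?_
  filter_upwards [ae_restrict_mem measurableSet_Icc] with y hy
  rw [Real.norm_of_nonneg (hardyDensity_nonneg (hsub hy).le)]
  exact hardyDensity_le hN hξmem hψmem hε0 hε1 (hsub hy) (by linarith [hy.2])

lemma integral_hardyDensity_le (hN : 1 ≤ N) (hα : 0 ≤ α)
    (hξmem : ∀ t ∈ Icc (0 : ℝ) 1, ξ t ∈ Icc (0 : ℝ) 1) (hψmem : ∀ t : ℝ, ψ t ∈ Icc (0 : ℝ) 1)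
    (hψ0 : ∀ t : ℝ, 1 / 2 ≤ |t| → ψ t = 0) (hε0 : 0 < ε) (hε : ε ≤ 1 / 2) :
    ∫ y in Ioi 0, hardyDensity N ξ ψ α ε y ≤ ∫ y in ε ^ 2..1 / 2, Real.log (1 / y) ^ (2 * α) / y := by
  have hsub : Icc (ε ^ 2) (1 / 2) ⊆ Ioi 0 := fun y hy => (by positivity : 0 < ε ^ 2).trans_le hy.1
  rw [setIntegral_eq_of_subset_of_forall_sdiff_eq_zero measurableSet_Ioi hsub
      fun y hy => hardyDensity_eq_zero_of_notMem hψ0 hy.2,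
    intervalIntegral.integral_of_le (by nlinarith), ← integral_Icc_eq_integral_Ioc]
  refine integral_mono_of_nonneg ?_
    ((continuousOn_log_inv_rpow_div (by positivity)).mono hsub).integrableOn_Icc ?_
  all_goals filter_upwards [ae_restrict_mem measurableSet_Icc] with y hy
  · exact hardyDensity_nonneg (hsub hy).le
  · exact hardyDensity_le hN hξmem hψmem hε0 (by linarith) (hsub hy) (by linarith [hy.2])

lemma integral_le_integral_hardyDensity (hN : 1 ≤ N) (hψ1 : ∀ t : ℝ, |t| ≤ 1 / 4 → ψ t = 1)
    (hε0 : 0 < ε) (hε : ε ≤ 1 / 4) (hint : IntegrableOn (hardyDensity N ξ ψ α ε) (Ioi 0)) :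
    ∫ y in ε..1 / 4, Real.log (1 / y) ^ (2 * α) / y ≤ ∫ y in Ioi 0, hardyDensity N ξ ψ α ε y := by
  rw [intervalIntegral.integral_of_le hε, ← setIntegral_congr_fun measurableSet_Ioc
    fun y hy => hardyDensity_eq_of_mem hN hψ1 hε0 (by linarith) hy]
  refine setIntegral_mono_set hint ?_ (Filter.Eventually.of_forall fun y hy => hε0.trans hy.1)
  filter_upwards [ae_restrict_mem measurableSet_Ioi] with y hy
  exact hardyDensity_nonneg (le_of_lt hy)

end HardyDensity

theorem Beps_two_sided_general (N : ℕ) (hN : 3 ≤ N) (α : ℝ) (hα : 0 ≤ α)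
    (ξ : ℝ → ℝ) (hξ : ContDiff ℝ (⊤ : ℕ∞) ξ)
    (hξmem : ∀ t ∈ Icc (0 : ℝ) 1, ξ t ∈ Icc (0 : ℝ) 1)
    (ψ : ℝ → ℝ) (hψ : ContDiff ℝ (⊤ : ℕ∞) ψ)
    (hψmem : ∀ t : ℝ, ψ t ∈ Icc (0 : ℝ) 1)
    (hψ1 : ∀ t : ℝ, |t| ≤ 1 / 4 → ψ t = 1)
    (hψ0 : ∀ t : ℝ, 1 / 2 ≤ |t| → ψ t = 0) :
    ∃ c₁ c₂ ε₀ : ℝ, 0 < c₁ ∧ c₁ ≤ c₂ ∧ 0 < ε₀ ∧ ε₀ < 1 ∧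
      ∀ ε ∈ Ioo (0 : ℝ) ε₀,
        c₁ * |Real.log ε| ^ (2 * α + 1)
            ≤ (∫ x in ball (0 : EuclideanSpace ℝ (Fin N)) 1,
                (uTest N ξ ψ α ε x) ^ 2 / ‖x‖ ^ 2) ∧
        (∫ x in ball (0 : EuclideanSpace ℝ (Fin N)) 1,
            (uTest N ξ ψ α ε x) ^ 2 / ‖x‖ ^ 2)
          ≤ c₂ * |Real.log ε| ^ (2 * α + 1) := by
  have hN1 : 1 ≤ N := by omega
  set c := N * volume.real (ball (0 : EuclideanSpace ℝ (Fin N)) 1)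
  have hc : 0 < c := mul_pos (by exact_mod_cast hN1)
    (ENNReal.toReal_pos (measure_ball_pos volume 0 one_pos).ne' measure_ball_lt_top.ne)
  have hp : 0 < 2 * α + 1 := by positivity
  refine ⟨c / (2 * (2 * α + 1)), c * (2 ^ (2 * α + 1) / (2 * α + 1)), 1 / 16, by positivity,
    ?_, by norm_num, by norm_num, fun ε ⟨hε0, hε⟩ => ?_⟩
  · calc c / (2 * (2 * α + 1)) ≤ c / (2 * α + 1) := by gcongr; linarith
      _ ≤ c * (2 ^ (2 * α + 1) / (2 * α + 1)) := by
        rw [← mul_div_assoc]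
        gcongr
        exact le_mul_of_one_le_right hc.le (Real.one_le_rpow one_le_two hp.le)
  have hlog : |Real.log ε| = Real.log (1 / ε) := by
    rw [one_div, Real.log_inv, abs_of_neg (Real.log_neg hε0 (by linarith))]
  rw [hlog, setIntegral_ball_uTest_sq_div_eq hN1 hψ0]
  constructor
  · calc c / (2 * (2 * α + 1)) * Real.log (1 / ε) ^ (2 * α + 1)
        = c * (Real.log (1 / ε) ^ (2 * α + 1) / (2 * (2 * α + 1))) := by ring
      _ ≤ _ := by
        gcongr
        exact (le_integral_log_inv_rpow_div (by positivity) hε0 hε.le).trans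
          (integral_le_integral_hardyDensity hN1 hψ1 hε0 (by linarith)
            (integrableOn_hardyDensity hN1 hα hξ.continuous.measurable hξmem
              hψ.continuous.measurable hψmem hψ0 hε0 (by linarith)))
  · calc _ ≤ c * (2 ^ (2 * α + 1) / (2 * α + 1) * Real.log (1 / ε) ^ (2 * α + 1)) := by
          gcongr
          exact (integral_hardyDensity_le hN1 hα hξmem hψmem hψ0 hε0 (by linarith)).trans
            (integral_log_inv_rpow_div_le (by positivity) hε0 (by linarith))
      _ = _ := by ring

/-- Two-sided estimate `B_ε = ∫_{B_1} u_ε²/|x|² ≃ |log ε|^{2α+1}`. -/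
theorem Beps_two_sided (N : ℕ) (hN : 3 ≤ N) (α μ : ℝ) (hα : 0 ≤ α)
    (hμ0 : 0 < μ) (hμ1 : μ < 1)
    (ξ : ℝ → ℝ) (hξ : ContDiff ℝ (⊤ : ℕ∞) ξ)
    (hξmem : ∀ t ∈ Icc (0 : ℝ) 1, ξ t ∈ Icc (0 : ℝ) 1)
    (hξ0 : ∀ t ∈ Icc (0 : ℝ) μ, ξ t = 0)
    (hξ1 : ∀ t ∈ Icc (1 - μ) (1 : ℝ), ξ t = 1)
    (ψ : ℝ → ℝ) (hψ : ContDiff ℝ (⊤ : ℕ∞) ψ)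
    (hψmem : ∀ t : ℝ, ψ t ∈ Icc (0 : ℝ) 1)
    (hψ1 : ∀ t : ℝ, |t| ≤ 1 / 4 → ψ t = 1)
    (hψ0 : ∀ t : ℝ, 1 / 2 ≤ |t| → ψ t = 0) :
    ∃ c₁ c₂ ε₀ : ℝ, 0 < c₁ ∧ c₁ ≤ c₂ ∧ 0 < ε₀ ∧ ε₀ < 1 ∧
      ∀ ε ∈ Ioo (0 : ℝ) ε₀,
        c₁ * |Real.log ε| ^ (2 * α + 1)
            ≤ (∫ x in ball (0 : EuclideanSpace ℝ (Fin N)) 1,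
                (uTest N ξ ψ α ε x) ^ 2 / ‖x‖ ^ 2) ∧
        (∫ x in ball (0 : EuclideanSpace ℝ (Fin N)) 1,
            (uTest N ξ ψ α ε x) ^ 2 / ‖x‖ ^ 2)
          ≤ c₂ * |Real.log ε| ^ (2 * α + 1) :=
  Beps_two_sided_general N hN α hα ξ hξ hξmem ψ hψ hψmem hψ1 hψ0
end LogIntegral
end

section
/- Let N ≥ 1 and let T ⊂ ℝ^N be a measurable set contained in the closed ball of radius 1/2 centered at the origin. Let 0 < h ≤ 1/4 and suppose the Lebesgue measure of T satisfies |T| ≥ 2 |B(0, h²)|, where B(0, h²) is the ball of radius h². Then ∫_T (log|x|)^{−2} dx ≥ |T| / (8 (log h)²). In particular, for the simplices of a regular quasi-uniform mesh of size h (whose elements have measure at least c h^N), one has ∫_T (log|x|)^{−2} dx ≳ |T| / |log h|² for h small. -/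
open MeasureTheory Metric

/-! Off the ball `B(0, h²)` the points of `T` satisfy `h² ≤ |x| ≤ 1/2 < 1`, and `x ↦ (log x)⁻²` is
monotone on `[0, 1)`, so the weight is at least `(log h²)⁻² = (4 (log h)²)⁻¹` there. The volume
hypothesis leaves at least half of `|T|` outside the ball. -/

lemma monotoneOn_inv_log_sq : MonotoneOn (fun x : ℝ => ((Real.log x) ^ 2)⁻¹) (Set.Ico 0 1) := by
  rintro s ⟨hs0, -⟩ r ⟨-, hr1⟩ hsr
  dsimp only
  rcases hs0.eq_or_lt with rfl | hs0
  · -- junk value: `log 0 = 0`, so the function vanishes at `0`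
    rw [Real.log_zero, zero_pow two_ne_zero, inv_zero]
    positivity
  have hlogr : Real.log r < 0 := Real.log_neg (hs0.trans_le hsr) hr1
  have hlog : Real.log s ≤ Real.log r := Real.log_le_log hs0 hsr
  exact inv_anti₀ (by nlinarith) (by nlinarith)

lemma integrableOn_inv_log_sq_norm_closedBall {E : Type*} [NormedAddCommGroup E]
    [MeasurableSpace E] [OpensMeasurableSpace E] [ProperSpace E] {μ : Measure E}
    [IsFiniteMeasureOnCompacts μ] {r : ℝ} (hr : r < 1) :
    IntegrableOn (fun x : E => ((Real.log ‖x‖) ^ 2)⁻¹) (closedBall 0 r) μ := by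
  refine Measure.integrableOn_of_bounded (M := ((Real.log r) ^ 2)⁻¹) measure_closedBall_lt_top.ne
    ((Real.measurable_log.comp measurable_norm).pow_const 2).inv.aestronglyMeasurable ?_
  filter_upwards [ae_restrict_mem measurableSet_closedBall] with x hx
  rw [mem_closedBall_zero_iff] at hx
  rw [Real.norm_of_nonneg (by positivity)]
  exact monotoneOn_inv_log_sq ⟨norm_nonneg x, hx.trans_lt hr⟩
    ⟨(norm_nonneg x).trans hx, hr⟩ hx

lemma mul_sub_measureReal_le_setIntegral {X : Type*} [MeasurableSpace X] {μ : Measure X}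
    {f : X → ℝ} {T B : Set X} {c : ℝ} (hT : MeasurableSet T) (hB : MeasurableSet B)
    (hTfin : μ T ≠ ⊤) (hBfin : μ B ≠ ⊤) (hc : 0 ≤ c) (hf0 : 0 ≤ f)
    (hfc : ∀ x ∈ T \ B, c ≤ f x) (hfi : IntegrableOn f T μ) :
    c * (μ.real T - μ.real B) ≤ ∫ x in T, f x ∂μ :=
  calc c * (μ.real T - μ.real B)
      ≤ c * μ.real (T \ B) := mul_le_mul_of_nonneg_left (le_measureReal_sdiff hBfin) hc
    _ ≤ ∫ x in T \ B, f x ∂μ :=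
        setIntegral_ge_of_const_le_real (hT.diff hB)
          (measure_ne_top_of_subset Set.sdiff_subset hTfin) hfc (hfi.mono_set Set.sdiff_subset)
    _ ≤ ∫ x in T, f x ∂μ :=
        setIntegral_mono_set hfi (.of_forall hf0) Set.sdiff_subset.eventuallyLE

theorem log_weight_lower_bound_general (N : ℕ)
    (T : Set (EuclideanSpace ℝ (Fin N))) (hTm : MeasurableSet T)
    (hTsub : T ⊆ closedBall (0 : EuclideanSpace ℝ (Fin N)) (1 / 2))
    (h : ℝ)
    (hvol : 2 * (volume (ball (0 : EuclideanSpace ℝ (Fin N)) (h ^ 2))).toReal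
      ≤ (volume T).toReal) :
    (volume T).toReal / (8 * (Real.log h) ^ 2)
      ≤ ∫ x in T, ((Real.log ‖x‖) ^ 2)⁻¹ := by
  have hweight : ∀ x ∈ T \ ball 0 (h ^ 2), (4 * (Real.log h) ^ 2)⁻¹ ≤ ((Real.log ‖x‖) ^ 2)⁻¹ := by
    rintro x ⟨hxT, hxB⟩
    have hx_le : ‖x‖ ≤ 1 / 2 := mem_closedBall_zero_iff.mp (hTsub hxT)
    have hx_ge : h ^ 2 ≤ ‖x‖ := by simpa using hxB
    have hmono := monotoneOn_inv_log_sq ⟨by positivity, by linarith⟩ ⟨by positivity, by linarith⟩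
      hx_ge
    dsimp only at hmono
    rwa [Real.log_pow, Nat.cast_ofNat, mul_pow, show (2 : ℝ) ^ 2 = 4 by norm_num] at hmono
  have key := mul_sub_measureReal_le_setIntegral (μ := volume) hTm measurableSet_ball
    (measure_ne_top_of_subset hTsub measure_closedBall_lt_top.ne) measure_ball_lt_top.ne
    (by positivity) (fun x => by positivity) hweight
    ((integrableOn_inv_log_sq_norm_closedBall (by norm_num)).mono_set hTsub)
  simp only [measureReal_def] at key
  calc (volume T).toReal / (8 * (Real.log h) ^ 2)
      = (4 * (Real.log h) ^ 2)⁻¹ * ((volume T).toReal - (volume T).toReal / 2) := by ring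
    _ ≤ _ := le_trans (mul_le_mul_of_nonneg_left (by linarith) (by positivity)) key

/-- Lower bound for the logarithmic weight on a small set: if
`T ⊆ closedBall 0 (1/2)` is measurable, `0 < h ≤ 1/4` and
`|T| ≥ 2 |B(0,h²)|`, then `∫_T (log|x|)^{-2} dx ≥ |T| / (8 (log h)²)`. -/
theorem log_weight_lower_bound (N : ℕ) (hN : 1 ≤ N)
    (T : Set (EuclideanSpace ℝ (Fin N))) (hTm : MeasurableSet T)
    (hTsub : T ⊆ closedBall (0 : EuclideanSpace ℝ (Fin N)) (1 / 2))
    (h : ℝ) (h0 : 0 < h) (h14 : h ≤ 1 / 4)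
    (hvol : 2 * (volume (ball (0 : EuclideanSpace ℝ (Fin N)) (h ^ 2))).toReal
      ≤ (volume T).toReal) :
    (volume T).toReal / (8 * (Real.log h) ^ 2)
      ≤ ∫ x in T, ((Real.log ‖x‖) ^ 2)⁻¹ :=
  log_weight_lower_bound_general N T hTm hTsub h hvol
end

section
/- For every p ∈ (1, ∞) and every dimension N ≥ 1 there exists a constant C = C(N, p) > 0 with the following property: for every compact convex set T ⊂ ℝ^N that contains a closed ball of radius ρ_T > 0, and every function u that is C² on a neighborhood of T, one has inf_{A ∈ ℝ^N} ∫_T |∇u(x) − A|^p dx ≥ C ρ_T^{N+p} max_{ξ ∈ S^{N−1}} min_{x ∈ T} |ξᵀ D²u(x) ξ|^p. The same lower bound holds under the weaker assumption that u is uniformly convex in one coordinate direction, i.e., inf_{x ∈ T} |∂²_{x_k} u(x)| > 0 for some k. -/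
/-!
Fix a unit vector `ξ` with `m ≤ |D²u(x)[ξ, ξ]|` on the ball `B(z, ρ)`. By Darboux's theorem the
second derivative of `u` in direction `ξ` keeps its sign along every segment in direction `ξ`, so
`g = ⟪∇u - A, ξ⟫` changes by at least `ρ m` between `x` and `x + ρ ξ` whenever `x` lies in the ball
`B'` of radius `ρ / 2` centred at `z - (ρ / 2) ξ`. Hence `|g x|` or `|g (x + ρ ξ)|` is at least
`ρ m / 2` there; integrating over `B'` and translating the second term by `ρ ξ` gives
`vol(B') (ρ m / 2) ^ p ≤ 2 ∫_T |∇u - A| ^ p`.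
-/

open MeasureTheory Metric Set

theorem mul_sub_le_sub_of_le_hasDerivAt {f f' : ℝ → ℝ} {a b m : ℝ} (hab : a ≤ b)
    (hf : ∀ t ∈ Icc a b, HasDerivAt f (f' t) t) (hm : ∀ t ∈ Icc a b, m ≤ f' t) :
    m * (b - a) ≤ f b - f a :=
  (convex_Icc a b).mul_sub_le_image_sub_of_le_deriv
    (fun t ht => (hf t ht).continuousAt.continuousWithinAt)
    (fun t ht => (hf t (interior_subset ht)).differentiableAt.differentiableWithinAt)
    (fun t ht => (hf t (interior_subset ht)).deriv ▸ hm t (interior_subset ht))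
    a (left_mem_Icc.2 hab) b (right_mem_Icc.2 hab) hab

/-- By Darboux's theorem a derivative bounded away from `0` in absolute value keeps its sign. -/
theorem mul_sub_le_abs_sub_of_le_abs_hasDerivAt {f f' : ℝ → ℝ} {a b m : ℝ} (hab : a ≤ b)
    (hf : ∀ t ∈ Icc a b, HasDerivAt f (f' t) t) (hm : ∀ t ∈ Icc a b, m ≤ |f' t|) :
    m * (b - a) ≤ |f b - f a| := by
  rcases le_or_gt m 0 with hm0 | hm0
  · exact (mul_nonpos_of_nonpos_of_nonneg hm0 (sub_nonneg.2 hab)).trans (abs_nonneg _)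
  have hconv : Convex ℝ (f' '' Icc a b) :=
    (convex_Icc a b).image_hasDerivWithinAt fun t ht => (hf t ht).hasDerivWithinAt
  have hsign : (∀ t ∈ Icc a b, m ≤ f' t) ∨ ∀ t ∈ Icc a b, m ≤ -f' t := by
    by_contra! ⟨⟨s, hs, hfs⟩, ⟨t, ht, hft⟩⟩
    have hzero : (0 : ℝ) ∈ f' '' Icc a b :=
      hconv.ordConnected.uIcc_subset (mem_image_of_mem f' hs) (mem_image_of_mem f' ht)
        (mem_uIcc_of_le (by linarith [(le_abs.1 (hm s hs)).resolve_left hfs.not_ge])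
          (by linarith [(le_abs.1 (hm t ht)).resolve_right hft.not_ge]))
    obtain ⟨r, hr, hfr⟩ := hzero
    have := hm r hr
    rw [hfr, abs_zero] at this
    linarith
  rcases hsign with hpos | hneg
  · exact (mul_sub_le_sub_of_le_hasDerivAt hab hf hpos).trans (le_abs_self _)
  · have := mul_sub_le_sub_of_le_hasDerivAt hab (fun t ht => (hf t ht).neg) hneg
    simp only [Pi.neg_apply] at this
    linarith [neg_abs_le (f b - f a)]

theorem mul_le_abs_fderiv_sub_of_le_abs_iteratedFDeriv {F : Type*} [NormedAddCommGroup F]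
    [NormedSpace ℝ F] {u : F → ℝ} {x ξ : F} {c m : ℝ} (hc : 0 ≤ c)
    (hu : ∀ t ∈ Icc 0 c, DifferentiableAt ℝ (fderiv ℝ u) (x + t • ξ))
    (hm : ∀ t ∈ Icc 0 c, m ≤ |iteratedFDeriv ℝ 2 u (x + t • ξ) ![ξ, ξ]|) :
    m * c ≤ |fderiv ℝ u (x + c • ξ) ξ - fderiv ℝ u x ξ| := by
  have hderiv : ∀ t ∈ Icc 0 c, HasDerivAt (fun s : ℝ => fderiv ℝ u (x + s • ξ) ξ)
      (iteratedFDeriv ℝ 2 u (x + t • ξ) ![ξ, ξ]) t := by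
    intro t ht
    have hline : HasDerivAt (fun s : ℝ => x + s • ξ) ξ t :=
      ((hasDerivAt_id t).smul_const ξ).const_add x |>.congr_deriv (one_smul ℝ ξ)
    rw [iteratedFDeriv_two_apply]
    exact (ContinuousLinearMap.apply ℝ ℝ ξ).hasFDerivAt.comp_hasDerivAt t
      ((hu t ht).hasFDerivAt.comp_hasDerivAt t hline)
  simpa using mul_sub_le_abs_sub_of_le_abs_hasDerivAt hc hderiv hm

theorem rpow_le_abs_rpow_add_abs_rpow_of_two_mul_le_abs_sub {r s b p : ℝ} (hb : 0 ≤ b) (hp : 0 ≤ p)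
    (h : 2 * b ≤ |s - r|) : b ^ p ≤ |s| ^ p + |r| ^ p := by
  rcases le_total b |s| with hs | hs
  · exact (Real.rpow_le_rpow hb hs hp).trans (le_add_of_nonneg_right (by positivity))
  · have hr : b ≤ |r| := by linarith [abs_sub s r]
    exact (Real.rpow_le_rpow hb hr hp).trans (le_add_of_nonneg_left (by positivity))

theorem measureReal_mul_rpow_le_two_mul_setIntegral_of_le_abs_sub {G : Type*} [AddGroup G]
    [MeasurableSpace G] [MeasurableAdd G] {μ : Measure G} [μ.IsAddRightInvariant]
    {g : G → ℝ} {B T : Set G} {v : G} {b p : ℝ} (hb : 0 ≤ b) (hp : 0 ≤ p)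
    (hB : MeasurableSet B) (hBfin : μ B ≠ ⊤) (hBT : B ⊆ T) (hBvT : ∀ x ∈ B, x + v ∈ T)
    (hg : IntegrableOn (fun x => |g x| ^ p) T μ) (hincr : ∀ x ∈ B, 2 * b ≤ |g (x + v) - g x|) :
    μ.real B * b ^ p ≤ 2 * ∫ x in T, |g x| ^ p ∂μ := by
  have hshift := measurePreserving_add_right μ v
  have hemb := (MeasurableEquiv.addRight v).measurableEmbedding
  have himage : (· + v) '' B ⊆ T := image_subset_iff.2 hBvT
  have hgB : IntegrableOn (fun x => |g x| ^ p) B μ := hg.mono_set hBT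
  have hgBv : IntegrableOn (fun x => |g (x + v)| ^ p) B μ :=
    (hshift.integrableOn_image hemb).1 (hg.mono_set himage)
  have hnonneg : 0 ≤ᵐ[μ.restrict T] fun x => |g x| ^ p :=
    Filter.Eventually.of_forall fun x => by positivity
  calc μ.real B * b ^ p = ∫ _ in B, b ^ p ∂μ := by simp
    _ ≤ ∫ x in B, (|g (x + v)| ^ p + |g x| ^ p) ∂μ :=
      setIntegral_mono_on (integrableOn_const hBfin) (hgBv.add hgB) hB
        fun x hx => rpow_le_abs_rpow_add_abs_rpow_of_two_mul_le_abs_sub hb hp (hincr x hx)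
    _ = ∫ x in (· + v) '' B, |g x| ^ p ∂μ + ∫ x in B, |g x| ^ p ∂μ := by
      rw [integral_add hgBv hgB, hshift.setIntegral_image_emb hemb]
    _ ≤ ∫ x in T, |g x| ^ p ∂μ + ∫ x in T, |g x| ^ p ∂μ :=
      add_le_add (setIntegral_mono_set hg hnonneg himage.eventuallyLE)
        (setIntegral_mono_set hg hnonneg hBT.eventuallyLE)
    _ = 2 * ∫ x in T, |g x| ^ p ∂μ := by ring

theorem add_smul_mem_closedBall_of_mem_closedBall_sub_half {F : Type*} [SeminormedAddCommGroup F]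
    [NormedSpace ℝ F] {x z ξ : F} {ρ t : ℝ} (hξ : ‖ξ‖ = 1)
    (hx : x ∈ closedBall (z - (ρ / 2) • ξ) (ρ / 2)) (ht : t ∈ Icc 0 ρ) :
    x + t • ξ ∈ closedBall z ρ := by
  rw [mem_closedBall, dist_eq_norm] at hx ⊢
  calc ‖x + t • ξ - z‖ = ‖(x - (z - (ρ / 2) • ξ)) + (t - ρ / 2) • ξ‖ := by congr 1; module
    _ ≤ ρ / 2 + |t - ρ / 2| := by
      grw [norm_add_le, hx, norm_smul, hξ, mul_one, Real.norm_eq_abs]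
    _ ≤ ρ / 2 + ρ / 2 := by
      gcongr
      exact abs_sub_le_iff.2 ⟨by linarith [ht.2], by linarith [ht.1]⟩
    _ = ρ := add_halves ρ

theorem ContDiffOn.continuousOn_gradient {E : Type*} [NormedAddCommGroup E]
    [InnerProductSpace ℝ E] [CompleteSpace E] {u : E → ℝ} {U : Set E} (hU : IsOpen U)
    (hu : ContDiffOn ℝ 1 u U) : ContinuousOn (gradient u) U :=
  (InnerProductSpace.toDual ℝ E).symm.continuous.comp_continuousOn
    (hu.continuousOn_fderiv_of_isOpen hU le_rfl)

theorem measureReal_ball_mul_rpow_le_iInf_setIntegral_norm_gradient_sub_rpow {E : Type*}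
    [NormedAddCommGroup E] [InnerProductSpace ℝ E] [FiniteDimensional ℝ E] [MeasurableSpace E]
    [BorelSpace E] (μ : Measure E) [μ.IsAddHaarMeasure] {u : E → ℝ} {T U : Set E} {z ξ : E}
    {ρ m p : ℝ} (hp : 0 < p) (hT : IsCompact T) (hρ : 0 < ρ) (hball : closedBall z ρ ⊆ T)
    (hU : IsOpen U) (hTU : T ⊆ U) (hu : ContDiffOn ℝ 2 u U) (hξ : ‖ξ‖ = 1) (hm0 : 0 ≤ m)
    (hm : ∀ x ∈ closedBall z ρ, m ≤ |iteratedFDeriv ℝ 2 u x ![ξ, ξ]|) :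
    μ.real (ball 0 1) / 2 ^ ((Module.finrank ℝ E : ℝ) + p + 1) * ρ ^ ((Module.finrank ℝ E : ℝ) + p)
        * m ^ p ≤ ⨅ A, ∫ x in T, ‖gradient u x - A‖ ^ p ∂μ := by
  refine le_ciInf fun A => ?_
  set B := closedBall (z - (ρ / 2) • ξ) (ρ / 2)
  set g : E → ℝ := fun y => inner ℝ (gradient u y - A) ξ
  have hsegment : ∀ x ∈ B, ∀ t ∈ Icc 0 ρ, x + t • ξ ∈ closedBall z ρ := fun x hx t ht =>
    add_smul_mem_closedBall_of_mem_closedBall_sub_half hξ hx ht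
  have hg_sub : ∀ x y, g y - g x = fderiv ℝ u y ξ - fderiv ℝ u x ξ := fun x y => by
    simp only [g, inner_sub_left, inner_gradient_left]; ring
  have hfd : ContDiffOn ℝ 1 (fderiv ℝ u) U := hu.fderiv_of_isOpen hU (by norm_num)
  have hincr : ∀ x ∈ B, 2 * (ρ / 2 * m) ≤ |g (x + ρ • ξ) - g x| := by
    intro x hx
    rw [hg_sub, show 2 * (ρ / 2 * m) = m * ρ by ring]
    refine mul_le_abs_fderiv_sub_of_le_abs_iteratedFDeriv hρ.le (fun t ht => ?_)
      fun t ht => hm _ (hsegment x hx t ht)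
    exact (hfd.differentiableOn one_ne_zero).differentiableAt
      (hU.mem_nhds (hTU (hball (hsegment x hx t ht))))
  have hgrad : ContinuousOn (gradient u) T :=
    ((hu.of_le one_le_two).continuousOn_gradient hU).mono hTU
  have hg_int : IntegrableOn (fun x => |g x| ^ p) T μ :=
    ((hgrad.sub continuousOn_const).inner continuousOn_const).abs.rpow_const
      (fun _ _ => Or.inr hp.le) |>.integrableOn_compact hT
  have hgrad_int : IntegrableOn (fun x => ‖gradient u x - A‖ ^ p) T μ :=
    (hgrad.sub continuousOn_const).norm.rpow_const
      (fun _ _ => Or.inr hp.le) |>.integrableOn_compact hT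
  have hB_mem : ∀ x ∈ B, x ∈ closedBall z ρ := fun x hx => by
    simpa using hsegment x hx 0 ⟨le_rfl, hρ.le⟩
  have hbound := measureReal_mul_rpow_le_two_mul_setIntegral_of_le_abs_sub (μ := μ)
    (by positivity) hp.le measurableSet_closedBall measure_closedBall_lt_top.ne
    (fun x hx => hball (hB_mem x hx)) (fun x hx => hball (hsegment x hx ρ ⟨hρ.le, le_rfl⟩))
    hg_int hincr
  have hg_le : ∫ x in T, |g x| ^ p ∂μ ≤ ∫ x in T, ‖gradient u x - A‖ ^ p ∂μ :=
    setIntegral_mono_on hg_int hgrad_int hT.measurableSet fun x _ => by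
      gcongr
      simpa [hξ] using abs_real_inner_le_norm (gradient u x - A) ξ
  have hvol : μ.real B = (ρ / 2) ^ (Module.finrank ℝ E : ℝ) * μ.real (ball 0 1) := by
    rw [Measure.addHaar_real_closedBall μ _ (by positivity), Real.rpow_natCast]
  have hconst : μ.real (ball 0 1) / 2 ^ ((Module.finrank ℝ E : ℝ) + p + 1)
      * ρ ^ ((Module.finrank ℝ E : ℝ) + p) * m ^ p = μ.real B * (ρ / 2 * m) ^ p / 2 := by
    simp only [hvol, Real.mul_rpow (by positivity : 0 ≤ ρ / 2) hm0,
      Real.div_rpow hρ.le zero_le_two, Real.rpow_add_one two_ne_zero, Real.rpow_add hρ,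
      Real.rpow_add zero_lt_two]
    field_simp
  rw [hconst]
  linarith

theorem gradient_constant_approximation_lower_bound_general (N : ℕ)
    (p : ℝ) (hp1 : 1 < p) :
    ∃ C : ℝ, 0 < C ∧
      (∀ T : Set (EuclideanSpace ℝ (Fin N)), IsCompact T → Convex ℝ T →
        ∀ z : EuclideanSpace ℝ (Fin N), ∀ ρ : ℝ, 0 < ρ → closedBall z ρ ⊆ T →
        ∀ u : EuclideanSpace ℝ (Fin N) → ℝ, ∀ U : Set (EuclideanSpace ℝ (Fin N)),
          IsOpen U → T ⊆ U → ContDiffOn ℝ 2 u U →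
        C * ρ ^ ((N : ℝ) + p) *
            (⨆ ξ : sphere (0 : EuclideanSpace ℝ (Fin N)) 1, ⨅ x : T,
              |iteratedFDeriv ℝ 2 u (x : EuclideanSpace ℝ (Fin N))
                ![(ξ : EuclideanSpace ℝ (Fin N)), (ξ : EuclideanSpace ℝ (Fin N))]| ^ p)
          ≤ ⨅ A : EuclideanSpace ℝ (Fin N), ∫ x in T, ‖gradient u x - A‖ ^ p) ∧
      (∀ T : Set (EuclideanSpace ℝ (Fin N)), IsCompact T → Convex ℝ T →
        ∀ z : EuclideanSpace ℝ (Fin N), ∀ ρ : ℝ, 0 < ρ → closedBall z ρ ⊆ T →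
        ∀ u : EuclideanSpace ℝ (Fin N) → ℝ, ∀ U : Set (EuclideanSpace ℝ (Fin N)),
          IsOpen U → T ⊆ U → ContDiffOn ℝ 2 u U →
        ∀ k : Fin N,
          0 < (⨅ x : T, |iteratedFDeriv ℝ 2 u (x : EuclideanSpace ℝ (Fin N))
              ![EuclideanSpace.single k (1 : ℝ), EuclideanSpace.single k (1 : ℝ)]|) →
          C * ρ ^ ((N : ℝ) + p) *
              (⨅ x : T, |iteratedFDeriv ℝ 2 u (x : EuclideanSpace ℝ (Fin N))
                ![EuclideanSpace.single k (1 : ℝ), EuclideanSpace.single k (1 : ℝ)]|) ^ p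
            ≤ ⨅ A : EuclideanSpace ℝ (Fin N), ∫ x in T, ‖gradient u x - A‖ ^ p) := by
  have hp : 0 < p := zero_lt_one.trans hp1
  have key := @measureReal_ball_mul_rpow_le_iInf_setIntegral_norm_gradient_sub_rpow
    (EuclideanSpace ℝ (Fin N)) _ _ _ _ _ volume _
  simp only [finrank_euclideanSpace_fin] at key
  have hC : 0 < volume.real (ball (0 : EuclideanSpace ℝ (Fin N)) 1) / 2 ^ ((N : ℝ) + p + 1) :=
    div_pos (ENNReal.toReal_pos (measure_ball_pos _ _ one_pos).ne' measure_ball_lt_top.ne)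
      (by positivity)
  refine ⟨_, hC, ?_, ?_⟩
  · intro T hT _ z ρ hρ hball u U hU hTU hu
    rw [Real.mul_iSup_of_nonneg (by positivity)]
    refine Real.iSup_le (fun ξ => ?_) (Real.iInf_nonneg fun A => setIntegral_nonneg
      hT.measurableSet fun x _ => by positivity)
    set M := ⨅ x : T, |iteratedFDeriv ℝ 2 u (x : EuclideanSpace ℝ (Fin N))
      ![(ξ : EuclideanSpace ℝ (Fin N)), (ξ : EuclideanSpace ℝ (Fin N))]| ^ p
    have hM : 0 ≤ M := Real.iInf_nonneg fun _ => by positivity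
    have hmin : ∀ x ∈ closedBall z ρ, M ^ p⁻¹ ≤ |iteratedFDeriv ℝ 2 u x
        ![(ξ : EuclideanSpace ℝ (Fin N)), (ξ : EuclideanSpace ℝ (Fin N))]| := fun x hx =>
      (Real.rpow_inv_le_iff_of_pos hM (abs_nonneg _) hp).2
        (ciInf_le ⟨0, forall_mem_range.2 fun _ => by positivity⟩ (⟨x, hball hx⟩ : T))
    rw [← Real.rpow_inv_rpow hM hp.ne']
    exact key hp hT hρ hball hU hTU hu (norm_eq_of_mem_sphere ξ) (Real.rpow_nonneg hM _) hmin
  · intro T hT _ z ρ hρ hball u U hU hTU hu k _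
    have hek : ‖EuclideanSpace.single k (1 : ℝ)‖ = 1 := by simp
    exact key hp hT hρ hball hU hTU hu hek (Real.iInf_nonneg fun _ => abs_nonneg _)
      fun x hx => ciInf_le ⟨0, forall_mem_range.2 fun _ => abs_nonneg _⟩ (⟨x, hball hx⟩ : T)

/-- Lower bound for the best `L^p` approximation of a gradient by constants
(cf. Lemma on uniformly convex directions): for `p ∈ (1,∞)` there is
`C = C(N,p) > 0` such that for every compact convex `T` containing a closed
ball of radius `ρ > 0` and every `u` of class `C²` on a neighborhood of `T`,
`inf_A ∫_T |∇u - A|^p ≥ C ρ^{N+p} max_{ξ ∈ S^{N-1}} min_{x ∈ T} |ξᵀD²u(x)ξ|^p`;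
and the same bound holds, for each coordinate direction `k` with
`inf_T |∂²_{x_k} u| > 0`, with the max-min replaced by
`(min_{x ∈ T} |e_kᵀ D²u(x) e_k|)^p`. -/
theorem gradient_constant_approximation_lower_bound (N : ℕ) (hN : 1 ≤ N)
    (p : ℝ) (hp1 : 1 < p) :
    ∃ C : ℝ, 0 < C ∧
      (∀ T : Set (EuclideanSpace ℝ (Fin N)), IsCompact T → Convex ℝ T →
        ∀ z : EuclideanSpace ℝ (Fin N), ∀ ρ : ℝ, 0 < ρ → closedBall z ρ ⊆ T →
        ∀ u : EuclideanSpace ℝ (Fin N) → ℝ, ∀ U : Set (EuclideanSpace ℝ (Fin N)),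
          IsOpen U → T ⊆ U → ContDiffOn ℝ 2 u U →
        C * ρ ^ ((N : ℝ) + p) *
            (⨆ ξ : sphere (0 : EuclideanSpace ℝ (Fin N)) 1, ⨅ x : T,
              |iteratedFDeriv ℝ 2 u (x : EuclideanSpace ℝ (Fin N))
                ![(ξ : EuclideanSpace ℝ (Fin N)), (ξ : EuclideanSpace ℝ (Fin N))]| ^ p)
          ≤ ⨅ A : EuclideanSpace ℝ (Fin N), ∫ x in T, ‖gradient u x - A‖ ^ p) ∧
      (∀ T : Set (EuclideanSpace ℝ (Fin N)), IsCompact T → Convex ℝ T →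
        ∀ z : EuclideanSpace ℝ (Fin N), ∀ ρ : ℝ, 0 < ρ → closedBall z ρ ⊆ T →
        ∀ u : EuclideanSpace ℝ (Fin N) → ℝ, ∀ U : Set (EuclideanSpace ℝ (Fin N)),
          IsOpen U → T ⊆ U → ContDiffOn ℝ 2 u U →
        ∀ k : Fin N,
          0 < (⨅ x : T, |iteratedFDeriv ℝ 2 u (x : EuclideanSpace ℝ (Fin N))
              ![EuclideanSpace.single k (1 : ℝ), EuclideanSpace.single k (1 : ℝ)]|) →
          C * ρ ^ ((N : ℝ) + p) *
              (⨅ x : T, |iteratedFDeriv ℝ 2 u (x : EuclideanSpace ℝ (Fin N))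
                ![EuclideanSpace.single k (1 : ℝ), EuclideanSpace.single k (1 : ℝ)]|) ^ p
            ≤ ⨅ A : EuclideanSpace ℝ (Fin N), ∫ x in T, ‖gradient u x - A‖ ^ p) :=
  gradient_constant_approximation_lower_bound_general N p hp1
end

section
/- Let N ≥ 3 and let c₂ ≥ c₁ > 0 and r₀ ∈ (0, 1/2). Let f : (0, r₀) → ℝ be a measurable function satisfying c₁ r^{−N/2} ≤ f(r) ≤ c₂ r^{−N/2} for all r ∈ (0, r₀). Then there exist a constant c > 0 and h₁ ∈ (0, r₀) such that for every h ∈ (0, h₁) and every A ∈ ℝ: ∫_0^h r^{N−1} ( f(r) − A )² (log r)^{−2} dr ≥ c / |log h|. -/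
/-!
With `φ(r) = r^{N/2} f(r) ∈ [c₁, c₂]` the integrand is `(φ(r) - A r^{N/2})² / (r log² r)`.
The kernel `1/(r log² r)` has primitive `-1/log r`, so it gives the interval `(h^α, h^β)` the mass
`(β⁻¹ - α⁻¹)/|log h|`. If `A h^{5N/8} ≤ c₂ + 1`, then for small `h` we have `A r^{N/2} ≤ c₁/2` on
`(h², h^{3/2})`, so `φ - A r^{N/2} ≥ c₁/2` there; otherwise `A r^{N/2} ≥ φ + 1` on `(h^{5/4}, h)`.
-/

open MeasureTheory Set Filter Topology

namespace Real

theorem continuousAt_inv_log {x : ℝ} (hx₁ : x ≠ 1) (hx₂ : x ≠ -1) :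
    ContinuousAt (fun y => (log y)⁻¹) x := by
  by_cases hx₀ : x = 0
  · subst hx₀
    rw [← continuousWithinAt_compl_self, ContinuousWithinAt, log_zero, inv_zero]
    exact tendsto_log_nhdsNE_zero.inv_tendsto_atBot
  · exact (continuousAt_log hx₀).inv₀ (log_ne_zero.2 ⟨hx₀, hx₁, hx₂⟩)

theorem hasDerivAt_neg_inv_log {r : ℝ} (hr : log r ≠ 0) :
    HasDerivAt (fun x => -(log x)⁻¹) (r * log r ^ 2)⁻¹ r := by
  have hr₀ : r ≠ 0 := by rintro rfl; exact hr log_zero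
  refine ((hasDerivAt_log hr₀).inv hr).neg.congr_deriv ?_
  rw [neg_div, neg_neg, div_eq_mul_inv, ← mul_inv]

variable {a b : ℝ}

theorem continuousOn_neg_inv_log_Icc (ha : 0 ≤ a) (hb : b < 1) :
    ContinuousOn (fun x => -(log x)⁻¹) (Icc a b) := fun x hx =>
  (continuousAt_inv_log (by linarith [hx.2]) (by linarith [hx.1])).neg.continuousWithinAt

theorem hasDerivAt_neg_inv_log_of_mem_Ioo (ha : 0 ≤ a) (hb : b < 1) {x : ℝ} (hx : x ∈ Ioo a b) :
    HasDerivAt (fun x => -(log x)⁻¹) (x * log x ^ 2)⁻¹ x :=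
  hasDerivAt_neg_inv_log (log_ne_zero_of_pos_of_ne_one (ha.trans_lt hx.1) (by linarith [hx.2]))

theorem integrableOn_inv_mul_log_sq (ha : 0 ≤ a) (hb : b < 1) :
    IntegrableOn (fun r => (r * log r ^ 2)⁻¹) (Ioc a b) :=
  intervalIntegral.integrableOn_deriv_of_nonneg (continuousOn_neg_inv_log_Icc ha hb)
    (fun _ => hasDerivAt_neg_inv_log_of_mem_Ioo ha hb)
    (fun x hx => by have := (ha.trans_lt hx.1).le; positivity)

theorem integral_inv_mul_log_sq (ha : 0 ≤ a) (hab : a ≤ b) (hb : b < 1) :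
    ∫ r in Ioo a b, (r * log r ^ 2)⁻¹ = (log a)⁻¹ - (log b)⁻¹ := by
  rw [← integral_Ioc_eq_integral_Ioo, ← intervalIntegral.integral_of_le hab,
    intervalIntegral.integral_eq_sub_of_hasDerivAt_of_le hab
      (continuousOn_neg_inv_log_Icc ha hb) (fun _ => hasDerivAt_neg_inv_log_of_mem_Ioo ha hb)
      ((intervalIntegrable_iff_integrableOn_Ioc_of_le hab).2 (integrableOn_inv_mul_log_sq ha hb))]
  ring

theorem inv_log_rpow_sub_inv_log_rpow {h : ℝ} (h₀ : 0 < h) (h₁ : h < 1) (α β : ℝ) :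
    (log (h ^ α))⁻¹ - (log (h ^ β))⁻¹ = (β⁻¹ - α⁻¹) / |log h| := by
  rw [log_rpow h₀, log_rpow h₀, abs_of_neg (log_neg h₀ h₁), mul_inv, mul_inv]
  ring

theorem le_setIntegral_mul_inv_mul_log_sq {g : ℝ → ℝ} {h C : ℝ} (ha : 0 ≤ a) (hab : a ≤ b)
    (hbh : b ≤ h) (h₁ : h < 1)
    (hg : IntegrableOn (fun r => g r * (r * log r ^ 2)⁻¹) (Ioo 0 h))
    (hg₀ : ∀ r ∈ Ioo 0 h, 0 ≤ g r) (hC : ∀ r ∈ Ioo a b, C ≤ g r) :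
    C * ((log a)⁻¹ - (log b)⁻¹) ≤ ∫ r in Ioo 0 h, g r * (r * log r ^ 2)⁻¹ := by
  have hsub : Ioo a b ⊆ Ioo 0 h := Ioo_subset_Ioo ha hbh
  have hκ₀ : ∀ r ∈ Ioo 0 h, 0 ≤ (r * log r ^ 2)⁻¹ := fun r hr => by
    have := hr.1.le; positivity
  calc C * ((log a)⁻¹ - (log b)⁻¹) = ∫ r in Ioo a b, C * (r * log r ^ 2)⁻¹ := by
        rw [integral_const_mul, integral_inv_mul_log_sq ha hab (hbh.trans_lt h₁)]
    _ ≤ ∫ r in Ioo a b, g r * (r * log r ^ 2)⁻¹ :=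
        setIntegral_mono_on
          (((integrableOn_inv_mul_log_sq ha (hbh.trans_lt h₁)).mono_set
            Ioo_subset_Ioc_self).const_mul C)
          (hg.mono_set hsub) measurableSet_Ioo
          fun r hr => mul_le_mul_of_nonneg_right (hC r hr) (hκ₀ r (hsub hr))
    _ ≤ ∫ r in Ioo 0 h, g r * (r * log r ^ 2)⁻¹ :=
        setIntegral_mono_set hg
          ((ae_restrict_mem measurableSet_Ioo).mono fun r hr =>
            mul_nonneg (hg₀ r hr) (hκ₀ r hr))
          hsub.eventuallyLE

theorem pow_sub_one_mul_sq_div_log_sq {N : ℕ} (hN : N ≠ 0) {r : ℝ} (hr : 0 < r) (x A : ℝ) :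
    r ^ (N - 1) * (x - A) ^ 2 / log r ^ 2
      = (r ^ ((N : ℝ) / 2) * x - A * r ^ ((N : ℝ) / 2)) ^ 2 * (r * log r ^ 2)⁻¹ := by
  have hs : (r ^ ((N : ℝ) / 2)) ^ 2 = r ^ (N - 1) * r := by
    rw [← rpow_mul_natCast hr.le, pow_sub_one_mul hN, ← rpow_natCast]
    norm_num
  calc r ^ (N - 1) * (x - A) ^ 2 / log r ^ 2
      = (r ^ ((N : ℝ) / 2)) ^ 2 * (x - A) ^ 2 * (r⁻¹ * (log r ^ 2)⁻¹) := by
        rw [hs, mul_right_comm, mul_assoc _ r, mul_inv_cancel_left₀ hr.ne', div_eq_mul_inv,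
          mul_right_comm]
    _ = _ := by rw [mul_inv]; ring

theorem le_rpow_mul_and_rpow_mul_le {r a c₁ c₂ x : ℝ} (hr : 0 < r)
    (hx : c₁ * r ^ (-a) ≤ x ∧ x ≤ c₂ * r ^ (-a)) : c₁ ≤ r ^ a * x ∧ r ^ a * x ≤ c₂ := by
  have hcancel : ∀ c, r ^ a * (c * r ^ (-a)) = c := fun c => by
    rw [rpow_neg hr.le, mul_left_comm, mul_inv_cancel₀ (rpow_pos_of_pos hr a).ne', mul_one]
  have hpos := rpow_nonneg hr.le a
  exact ⟨(hcancel c₁).symm.trans_le (mul_le_mul_of_nonneg_left hx.1 hpos),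
    (mul_le_mul_of_nonneg_left hx.2 hpos).trans_eq (hcancel c₂)⟩

theorem integrableOn_mul_inv_mul_log_sq {g : ℝ → ℝ} {h M : ℝ} (h₁ : h < 1)
    (hg : AEStronglyMeasurable g (volume.restrict (Ioo 0 h))) (hM : ∀ r ∈ Ioo 0 h, |g r| ≤ M) :
    IntegrableOn (fun r => g r * (r * log r ^ 2)⁻¹) (Ioo 0 h) :=
  ((integrableOn_inv_mul_log_sq le_rfl h₁).mono_set Ioo_subset_Ioc_self).bdd_mul hg
    ((ae_restrict_mem measurableSet_Ioo).mono hM)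

section SqSubMulRpow

variable {p c₁ c₂ h A : ℝ} {φ : ℝ → ℝ}

theorem integrableOn_sq_sub_mul_rpow (hp : 0 < p) (hc₁ : 0 < c₁)
    (hφ : AEStronglyMeasurable φ (volume.restrict (Ioo 0 h)))
    (hφ_bounds : ∀ r ∈ Ioo 0 h, c₁ ≤ φ r ∧ φ r ≤ c₂) (h₁ : h < 1) :
    IntegrableOn (fun r => (φ r - A * r ^ p) ^ 2 * (r * log r ^ 2)⁻¹) (Ioo 0 h) := by
  refine integrableOn_mul_inv_mul_log_sq h₁ ((hφ.sub (by fun_prop)).pow 2)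
    (M := (c₂ + |A|) ^ 2) fun r hr => ?_
  have hrp : r ^ p ≤ 1 := rpow_le_one hr.1.le (hr.2.trans h₁).le hp.le
  have hrp₀ : 0 ≤ r ^ p := rpow_nonneg hr.1.le p
  obtain ⟨hlow, hupp⟩ := hφ_bounds r hr
  rw [abs_pow, sq_abs]
  exact sq_le_sq' (by nlinarith [neg_abs_le A, le_abs_self A])
    (by nlinarith [neg_abs_le A, le_abs_self A])

variable (hp : 0 < p) (hc₁ : 0 < c₁) (hφ_bounds : ∀ r ∈ Ioo 0 h, c₁ ≤ φ r ∧ φ r ≤ c₂)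
  (h₀ : 0 < h) (h₁ : h < 1)
  (hint : IntegrableOn (fun r => (φ r - A * r ^ p) ^ 2 * (r * log r ^ 2)⁻¹) (Ioo 0 h))
include hp hc₁ hφ_bounds h₀ h₁ hint

theorem le_setIntegral_sq_sub_mul_rpow_of_le (hsmall : (c₂ + 1) * h ^ (p / 4) ≤ c₁ / 2)
    (hA : A * h ^ (5 / 4 * p) ≤ c₂ + 1) :
    c₁ ^ 2 / 24 / |log h| ≤ ∫ r in Ioo 0 h, (φ r - A * r ^ p) ^ 2 * (r * log r ^ 2)⁻¹ := by
  have hpt : ∀ r ∈ Ioo (h ^ (2 : ℝ)) (h ^ (3 / 2 : ℝ)), (c₁ / 2) ^ 2 ≤ (φ r - A * r ^ p) ^ 2 := by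
    intro r hr
    have hr' : r ∈ Ioo 0 h := ⟨(rpow_pos_of_pos h₀ _).trans hr.1,
      hr.2.trans_le (rpow_le_self_of_le_one h₀.le h₁.le (by norm_num))⟩
    have hAr : A * r ^ p ≤ c₁ / 2 := by
      rcases le_or_gt A 0 with hA₀ | hA₀
      · nlinarith [rpow_nonneg hr'.1.le p]
      · calc A * r ^ p ≤ A * (h ^ (3 / 2 : ℝ)) ^ p :=
              mul_le_mul_of_nonneg_left (rpow_le_rpow hr'.1.le hr.2.le hp.le) hA₀.le
          _ = A * h ^ (5 / 4 * p) * h ^ (p / 4) := by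
              rw [← rpow_mul h₀.le, mul_assoc, ← rpow_add h₀]; ring_nf
          _ ≤ (c₂ + 1) * h ^ (p / 4) := mul_le_mul_of_nonneg_right hA (by positivity)
          _ ≤ c₁ / 2 := hsmall
    exact pow_le_pow_left₀ (by positivity) (by linarith [(hφ_bounds r hr').1]) 2
  have key := le_setIntegral_mul_inv_mul_log_sq (rpow_nonneg h₀.le _)
    (rpow_le_rpow_of_exponent_ge h₀ h₁.le (by norm_num))
    (rpow_le_self_of_le_one h₀.le h₁.le (by norm_num)) h₁ hint (fun _ _ => sq_nonneg _) hpt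
  rw [inv_log_rpow_sub_inv_log_rpow h₀ h₁] at key
  calc c₁ ^ 2 / 24 / |log h| = (c₁ / 2) ^ 2 * (((3 / 2 : ℝ)⁻¹ - (2 : ℝ)⁻¹) / |log h|) := by ring
    _ ≤ _ := key

theorem le_setIntegral_sq_sub_mul_rpow_of_lt (hA : c₂ + 1 < A * h ^ (5 / 4 * p)) :
    1 / 5 / |log h| ≤ ∫ r in Ioo 0 h, (φ r - A * r ^ p) ^ 2 * (r * log r ^ 2)⁻¹ := by
  have hpt : ∀ r ∈ Ioo (h ^ (5 / 4 : ℝ)) (h ^ (1 : ℝ)), 1 ≤ (φ r - A * r ^ p) ^ 2 := by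
    intro r hr
    rw [rpow_one] at hr
    obtain ⟨hlow, hupp⟩ := hφ_bounds r ⟨(rpow_pos_of_pos h₀ _).trans hr.1, hr.2⟩
    have hA₀ : 0 < A := pos_of_mul_pos_left (by linarith) (rpow_nonneg h₀.le (5 / 4 * p))
    have hAr : A * h ^ (5 / 4 * p) ≤ A * r ^ p := by
      rw [rpow_mul h₀.le]
      exact mul_le_mul_of_nonneg_left (rpow_le_rpow (by positivity) hr.1.le hp.le) hA₀.le
    nlinarith
  have key := le_setIntegral_mul_inv_mul_log_sq (rpow_nonneg h₀.le _)
    (rpow_le_rpow_of_exponent_ge h₀ h₁.le (by norm_num)) (rpow_one h).le h₁ hint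
    (fun _ _ => sq_nonneg _) hpt
  rw [inv_log_rpow_sub_inv_log_rpow h₀ h₁] at key
  calc 1 / 5 / |log h| = 1 * (((1 : ℝ)⁻¹ - (5 / 4 : ℝ)⁻¹) / |log h|) := by ring
    _ ≤ _ := key

end SqSubMulRpow

theorem le_setIntegral_sq_sub_mul_rpow {p c₁ c₂ h : ℝ} {φ : ℝ → ℝ} (hp : 0 < p) (hc₁ : 0 < c₁)
    (hφ : AEStronglyMeasurable φ (volume.restrict (Ioo 0 h)))
    (hφ_bounds : ∀ r ∈ Ioo 0 h, c₁ ≤ φ r ∧ φ r ≤ c₂) (h₀ : 0 < h) (h₁ : h < 1)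
    (hsmall : (c₂ + 1) * h ^ (p / 4) ≤ c₁ / 2) (A : ℝ) :
    min (c₁ ^ 2 / 24) (1 / 5) / |log h|
      ≤ ∫ r in Ioo 0 h, (φ r - A * r ^ p) ^ 2 * (r * log r ^ 2)⁻¹ := by
  have hint := integrableOn_sq_sub_mul_rpow (A := A) hp hc₁ hφ hφ_bounds h₁
  rcases le_or_gt (A * h ^ (5 / 4 * p)) (c₂ + 1) with hA | hA
  · exact (div_le_div_of_nonneg_right (min_le_left _ _) (abs_nonneg _)).trans
      (le_setIntegral_sq_sub_mul_rpow_of_le hp hc₁ hφ_bounds h₀ h₁ hint hsmall hA)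
  · exact (div_le_div_of_nonneg_right (min_le_right _ _) (abs_nonneg _)).trans
      (le_setIntegral_sq_sub_mul_rpow_of_lt hp hc₁ hφ_bounds h₀ h₁ hint hA)

theorem exists_le_setIntegral_sq_sub_mul_rpow {p c₁ c₂ r₀ : ℝ} {φ : ℝ → ℝ} (hp : 0 < p)
    (hc₁ : 0 < c₁) (hr₀ : 0 < r₀) (hφ : Measurable φ)
    (hφ_bounds : ∀ r ∈ Ioo 0 r₀, c₁ ≤ φ r ∧ φ r ≤ c₂) :
    ∃ c : ℝ, 0 < c ∧ ∃ h₁ ∈ Ioo (0 : ℝ) r₀, ∀ h ∈ Ioo (0 : ℝ) h₁, ∀ A : ℝ,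
      c / |log h| ≤ ∫ r in Ioo 0 h, (φ r - A * r ^ p) ^ 2 * (r * log r ^ 2)⁻¹ := by
  have htendsto : Tendsto (fun h : ℝ => (c₂ + 1) * h ^ (p / 4)) (𝓝 0) (𝓝 0) := by
    simpa [zero_rpow (by positivity : p / 4 ≠ 0)] using
      ((continuousAt_rpow_const 0 (p / 4) (Or.inr (by positivity))).tendsto.const_mul (c₂ + 1))
  obtain ⟨u, hu, hsub⟩ := mem_nhdsGT_iff_exists_Ioo_subset.1 <|
    (eventually_lt_nhds one_pos).and (htendsto.eventually (eventually_le_nhds (half_pos hc₁)))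
      |>.filter_mono nhdsWithin_le_nhds
  have hu₀ : 0 < min u (r₀ / 2) := lt_min hu (half_pos hr₀)
  have hur₀ : min u (r₀ / 2) < r₀ := (min_le_right _ _).trans_lt (half_lt_self hr₀)
  refine ⟨min (c₁ ^ 2 / 24) (1 / 5), by positivity, min u (r₀ / 2), ⟨hu₀, hur₀⟩,
    fun h hh A => ?_⟩
  obtain ⟨hlt_one, hsmall⟩ := hsub ⟨hh.1, hh.2.trans_le (min_le_left _ _)⟩
  exact le_setIntegral_sq_sub_mul_rpow hp hc₁ hφ.aestronglyMeasurable
    (fun r hr => hφ_bounds r ⟨hr.1, hr.2.trans (hh.2.trans hur₀)⟩) hh.1 hlt_one hsmall A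

end Real

theorem radial_constant_approx_lower_bound_general (N : ℕ) (hN : 3 ≤ N)
    (c₁ c₂ r₀ : ℝ) (hc₁ : 0 < c₁)
    (hr₀ : r₀ ∈ Ioo (0 : ℝ) (1 / 2))
    (f : ℝ → ℝ) (hf_meas : Measurable f)
    (hf : ∀ r ∈ Ioo (0 : ℝ) r₀,
      c₁ * r ^ (-(N : ℝ) / 2) ≤ f r ∧ f r ≤ c₂ * r ^ (-(N : ℝ) / 2)) :
    ∃ c : ℝ, 0 < c ∧ ∃ h₁ ∈ Ioo (0 : ℝ) r₀, ∀ h ∈ Ioo (0 : ℝ) h₁, ∀ A : ℝ,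
      c / |Real.log h|
        ≤ ∫ r in Ioo (0 : ℝ) h, r ^ (N - 1) * (f r - A) ^ 2 / (Real.log r) ^ 2 := by
  have hN₀ : (0 : ℝ) < N := by exact_mod_cast (by omega : 0 < N)
  obtain ⟨c, hc, h₁, hh₁, hbound⟩ := Real.exists_le_setIntegral_sq_sub_mul_rpow
    (p := (N : ℝ) / 2) (φ := fun r => r ^ ((N : ℝ) / 2) * f r) (by positivity) hc₁ hr₀.1
    ((measurable_id.pow_const _).mul hf_meas)
    (fun r hr => Real.le_rpow_mul_and_rpow_mul_le hr.1 (by simpa only [neg_div] using hf r hr))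
  refine ⟨c, hc, h₁, hh₁, fun h hh A => (hbound h hh A).trans_eq ?_⟩
  exact setIntegral_congr_fun measurableSet_Ioo fun r hr =>
    (Real.pow_sub_one_mul_sq_div_log_sq (N := N) (by omega) hr.1 (f r) A).symm

/-- Key lower bound for approximation by constants of a radial derivative
behaving like `r^{-N/2}`: if `c₁ r^{-N/2} ≤ f(r) ≤ c₂ r^{-N/2}` on `(0, r₀)`,
then there are `c > 0` and `h₁ ∈ (0, r₀)` such that for all `h ∈ (0, h₁)` and
all `A ∈ ℝ`, `∫_0^h r^{N-1} (f(r) - A)² (log r)^{-2} dr ≥ c/|log h|`. -/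
theorem radial_constant_approx_lower_bound (N : ℕ) (hN : 3 ≤ N)
    (c₁ c₂ r₀ : ℝ) (hc₁ : 0 < c₁) (hc₁₂ : c₁ ≤ c₂)
    (hr₀ : r₀ ∈ Ioo (0 : ℝ) (1 / 2))
    (f : ℝ → ℝ) (hf_meas : Measurable f)
    (hf : ∀ r ∈ Ioo (0 : ℝ) r₀,
      c₁ * r ^ (-(N : ℝ) / 2) ≤ f r ∧ f r ≤ c₂ * r ^ (-(N : ℝ) / 2)) :
    ∃ c : ℝ, 0 < c ∧ ∃ h₁ ∈ Ioo (0 : ℝ) r₀, ∀ h ∈ Ioo (0 : ℝ) h₁, ∀ A : ℝ,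
      c / |Real.log h|
        ≤ ∫ r in Ioo (0 : ℝ) h, r ^ (N - 1) * (f r - A) ^ 2 / (Real.log r) ^ 2 :=
  radial_constant_approx_lower_bound_general N hN c₁ c₂ r₀ hc₁ hr₀ f hf_meas hf
end
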